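/- Let m ≥ 1, let r_1,…,r_m be nonnegative integers with n = ∑_{j=1}^m r_j ≥ 2 and N = ∑_{j=1}^m j·r_j, and define the polynomial h(t) = ∏_{j=1}^m (1 + t + ⋯ + t^j)^{r_j} − t·∏_{j=1}^m (1 + t + ⋯ + t^{j−1})^{r_j} ∈ ℤ[t]. Then t^N · h(t^{−1}) − h(t) = t(1 − t^{n−2}) · ∏_{j=1}^m (1 + t + ⋯ + t^{j−1})^{r_j}, where t^N h(t^{−1}) denotes the reversed polynomial ∑_i h_{N−i} t^i of h = ∑_i h_i t^i. -/

import Mathlib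

open Polynomial MvPolynomial Finset CategoryTheory



namespace OddCycleComp

/-! ## The graph `𝔤_{r_1,…,r_m}` : `n` odd cycles sharing a single common vertex.
Cycle `i` (for `i : Fin n`) has length `2 * k i + 1`.  The common vertex is `none`;
the vertex `u_i^{(j)}` (`1 ≤ j ≤ 2 k_i`) is `some ⟨i, j-1⟩`.  The edge `x_{i,j}`
(`1 ≤ j ≤ 2 k_i + 1`) is encoded as `⟨i, j-1⟩`. -/

/-- The vertex set of the graph. -/
abbrev Vtx (n : ℕ) (k : Fin n → ℕ) : Type := Option (Σ i : Fin n, Fin (2 * k i))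

/-- The (labels of the) edges of the graph: `⟨i, j⟩` is the edge `x_{i,j+1}` of the paper. -/
abbrev Edg (n : ℕ) (k : Fin n → ℕ) : Type := Σ i : Fin n, Fin (2 * k i + 1)

variable {n : ℕ} {k : Fin n → ℕ}

/-- First endpoint of the edge `x_{i,j}`: `u` if `j = 1`, else `u_i^{(j-1)}`. -/
def endpt1 (e : Edg n k) : Vtx n k :=
  if h : (e.2 : ℕ) = 0 then none
  else some ⟨e.1, ⟨(e.2 : ℕ) - 1, by have := e.2.isLt; omega⟩⟩

/-- Second endpoint of the edge `x_{i,j}`: `u` if `j = 2 k_i + 1`, else `u_i^{(j)}`. -/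
def endpt2 (e : Edg n k) : Vtx n k :=
  if h : (e.2 : ℕ) = 2 * k e.1 then none
  else some ⟨e.1, ⟨(e.2 : ℕ), by have := e.2.isLt; omega⟩⟩

/-- The edge `x_{i,j}` as an unordered pair of vertices. -/
def edgeSym2 (e : Edg n k) : Sym2 (Vtx n k) := s(endpt1 e, endpt2 e)

/-- The graph `𝔤` consisting of the `n` odd cycles sharing the common vertex `none`. -/
def cycGraph (n : ℕ) (k : Fin n → ℕ) : SimpleGraph (Vtx n k) :=
  SimpleGraph.fromEdgeSet (Set.range (edgeSym2 (n := n) (k := k)))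

variable (K : Type*) [Field K]

/-- The `K`-algebra map sending each edge variable to the product of its endpoints. -/
noncomputable def phi (n : ℕ) (k : Fin n → ℕ) :
    MvPolynomial (Edg n k) K →ₐ[K] MvPolynomial (Vtx n k) K :=
  MvPolynomial.aeval fun e => X (endpt1 e) * X (endpt2 e)

/-- The toric ideal `I_𝔤`, i.e. the kernel of `phi`. -/
noncomputable def toricIdeal (n : ℕ) (k : Fin n → ℕ) : Ideal (MvPolynomial (Edg n k) K) :=
  RingHom.ker (phi K n k)

/-- The edge ring `K[𝔤] ≅ K[x_{i,j}]/I_𝔤`. -/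
abbrev EdgeRing (n : ℕ) (k : Fin n → ℕ) := MvPolynomial (Edg n k) K ⧸ toricIdeal K n k

/-! ## Hilbert series and `h`-polynomials -/

/-- The Hilbert function of `S/I`: the `K`-dimension of the image of the space of
degree-`d` homogeneous polynomials in the quotient (for a homogeneous ideal this is the
dimension of the degree-`d` graded piece of `S/I`). -/
noncomputable def hilbertFun {σ : Type*} (I : Ideal (MvPolynomial σ K)) (d : ℕ) : ℕ :=
  Module.finrank K
    ((MvPolynomial.homogeneousSubmodule σ K d).map (Ideal.Quotient.mkₐ K I).toLinearMap)

/-- `IsHPolyOf hf P` says `P` is *the* `h`-polynomial of a ring with Hilbert function `hf`: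
the Hilbert series equals `P(t)/(1-t)^d` for some `d`, and `P(1) ≠ 0`.
(By the Hilbert–Serre theorem, `d` is then the Krull dimension, and `P` is unique.) -/
def IsHPolyOf (hf : ℕ → ℕ) (P : Polynomial ℤ) : Prop :=
  P.eval 1 ≠ 0 ∧ ∃ d : ℕ,
    (PowerSeries.mk fun i => (hf i : ℤ)) * (1 - PowerSeries.X) ^ d
      = PowerSeries.mk fun i => P.coeff i

/-- The `h`-polynomial formula `∏ (1+⋯+t^j)^{r_j} - t ∏ (1+⋯+t^{j-1})^{r_j}`
(here the index `j : Fin m` stands for the paper's `j = (j : ℕ) + 1 ∈ {1,…,m}`). -/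
noncomputable def hFormula (m : ℕ) (r : Fin m → ℕ) : Polynomial ℤ :=
  (∏ j : Fin m, (∑ i ∈ Finset.range ((j : ℕ) + 2), (Polynomial.X : Polynomial ℤ) ^ i) ^ r j)
    - Polynomial.X *
      ∏ j : Fin m, (∑ i ∈ Finset.range ((j : ℕ) + 1), (Polynomial.X : Polynomial ℤ) ^ i) ^ r j

/-! ## The binomial generators of the toric ideal -/

/-- `∏_{s=0}^{k_i} x_{i,2s+1}`, the product of the odd-labelled edges of cycle `i`. -/
noncomputable def oddProd (n : ℕ) (k : Fin n → ℕ) (i : Fin n) : MvPolynomial (Edg n k) K :=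
  ∏ s : Fin (k i + 1), X ⟨i, ⟨2 * (s : ℕ), by have := s.isLt; omega⟩⟩

/-- `∏_{t=1}^{k_i} x_{i,2t}`, the product of the even-labelled edges of cycle `i`. -/
noncomputable def evenProd (n : ℕ) (k : Fin n → ℕ) (i : Fin n) : MvPolynomial (Edg n k) K :=
  ∏ t : Fin (k i), X ⟨i, ⟨2 * (t : ℕ) + 1, by have := t.isLt; omega⟩⟩

/-- The binomial `(∏_{s=0}^{k_i} x_{i,2s+1})(∏_{t=1}^{k_j} x_{j,2t})
 - (∏_{s=1}^{k_i} x_{i,2s})(∏_{t=0}^{k_j} x_{j,2t+1})`. -/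
noncomputable def cycBinomial (n : ℕ) (k : Fin n → ℕ) (i j : Fin n) :
    MvPolynomial (Edg n k) K :=
  oddProd K n k i * evenProd K n k j - evenProd K n k i * oddProd K n k j

end OddCycleComp



namespace OddCycleComp

variable {n : ℕ} {k : Fin n → ℕ}
variable (K : Type*) [Field K]

/-! ## The graded lexicographic order and initial ideals -/

/-- Global rank of the edge variable `x_{i,j}`: the variables are ordered
`x_{1,1} ≻ x_{1,2} ≻ ⋯ ≻ x_{n,2k_n+1}`, with smaller rank = larger variable. -/
def rankVar (e : Edg n k) : ℕ :=
  (∑ i ∈ Finset.univ.filter (fun i : Fin n => i < e.1), (2 * k i + 1)) + (e.2 : ℕ)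

/-- The graded lexicographic order on exponent vectors induced by the above variable order:
`a ≺ b` iff `deg a < deg b`, or degrees agree and at the most significant variable where they
differ, `b` has the larger exponent. -/
def GrlexLT (a b : Edg n k →₀ ℕ) : Prop :=
  (a.sum fun _ x => x) < (b.sum fun _ x => x) ∨
    ((a.sum fun _ x => x) = (b.sum fun _ x => x) ∧
      ∃ e, a e < b e ∧ ∀ e', rankVar e' < rankVar e → a e' = b e')

/-- `u` is the exponent vector of the leading monomial of `p` w.r.t. grlex. -/
def IsLeadMonomial (p : MvPolynomial (Edg n k) K) (u : Edg n k →₀ ℕ) : Prop :=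
  u ∈ p.support ∧ ∀ v ∈ p.support, v ≠ u → GrlexLT v u

/-- The initial ideal of `I` w.r.t. the grlex order: the ideal generated by the leading
monomials of the nonzero elements of `I`. -/
noncomputable def initialIdeal (n : ℕ) (k : Fin n → ℕ) (I : Ideal (MvPolynomial (Edg n k) K)) :
    Ideal (MvPolynomial (Edg n k) K) :=
  Ideal.span {q | ∃ p ∈ I, ∃ u, IsLeadMonomial K p u ∧ q = monomial u (1 : K)}

/-- `G` is a Gröbner basis of `I` w.r.t. the grlex order. -/
def IsGroebnerBasis (n : ℕ) (k : Fin n → ℕ) (I : Ideal (MvPolynomial (Edg n k) K))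
    (G : Set (MvPolynomial (Edg n k) K)) : Prop :=
  G ⊆ (I : Set (MvPolynomial (Edg n k) K)) ∧
    initialIdeal K n k I =
      Ideal.span {q | ∃ g ∈ G, ∃ u, IsLeadMonomial K g u ∧ q = monomial u (1 : K)}

end OddCycleComp



namespace OddCycleComp

variable (K : Type*) [Field K]

/-! ## Depth, Cohen–Macaulay type, (almost) Gorenstein -/

/-- `Ext^i_R(R/𝔪, R)` as an `R`-module. -/
noncomputable def extRes (R : Type*) [CommRing R] (𝔪 : Ideal R) (i : ℕ) : ModuleCat R :=
  (((Ext R (ModuleCat R) i).obj (Opposite.op (ModuleCat.of R (R ⧸ 𝔪)))).obj (ModuleCat.of R R))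

/-- The depth of `R` w.r.t. `𝔪`: the least `i` with `Ext^i_R(R/𝔪, R) ≠ 0`. -/
noncomputable def depthOf (R : Type*) [CommRing R] (𝔪 : Ideal R) : ℕ :=
  sInf {i | Nontrivial (extRes R 𝔪 i)}

/-- The Krull dimension of `R`, as a natural number. -/
noncomputable def krullDimNat (R : Type*) [CommRing R] : ℕ :=
  WithTop.untopD 0 (WithBot.unbotD 0 (ringKrullDim R))

/-- A (graded) ring `R` with irrelevant maximal ideal `𝔪` is Cohen–Macaulay
iff `depth_𝔪 R = dim R`. -/
def IsCMOf (R : Type*) [CommRing R] (𝔪 : Ideal R) : Prop :=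
  depthOf R 𝔪 = krullDimNat R

/-- The Cohen–Macaulay type of `R`: `dim_K Ext^depth_R(R/𝔪, R)`, which for a Cohen–Macaulay
graded ring is the minimal number of generators of the canonical module. -/
noncomputable def cmType (R : Type*) [CommRing R] [Algebra K R] (𝔪 : Ideal R) : ℕ :=
  letI : Module K (extRes R 𝔪 (depthOf R 𝔪)) :=
    Module.compHom (extRes R 𝔪 (depthOf R 𝔪)) (algebraMap K R)
  Module.finrank K (extRes R 𝔪 (depthOf R 𝔪))

/-- The irrelevant maximal ideal of the standard graded quotient `K[x]/I`. -/
noncomputable def irrelevantIdeal {σ : Type*} (I : Ideal (MvPolynomial σ K)) :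
    Ideal (MvPolynomial σ K ⧸ I) :=
  (Ideal.span (Set.range (X : σ → MvPolynomial σ K))).map (Ideal.Quotient.mk I)

/-- The Cohen–Macaulay type of the standard graded algebra `K[x]/I`. -/
noncomputable def cmTypeQuot {σ : Type*} (I : Ideal (MvPolynomial σ K)) : ℕ :=
  cmType K (MvPolynomial σ K ⧸ I) (irrelevantIdeal K I)

/-- `ẽ(R) = ∑_{i=0}^{s} ((h_s + ⋯ + h_{s-i}) - (h_0 + ⋯ + h_i))`, computed from the
`h`-polynomial `P` with `h`-vector `(h_0, …, h_s)`, `s = deg P`. -/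
noncomputable def tildeE (P : Polynomial ℤ) : ℤ :=
  ∑ i ∈ Finset.range (P.natDegree + 1),
    ((∑ l ∈ Finset.range (i + 1), P.coeff (P.natDegree - l)) -
      ∑ l ∈ Finset.range (i + 1), P.coeff l)

end OddCycleComp


namespace OddCycleComp

section SR

variable (K : Type*) [Field K]

/-- `O_i`, the set of odd-labelled edges `{x_{i,1}, x_{i,3}, …, x_{i,2k_i+1}}` of cycle `i`. -/
def Oset (n : ℕ) (k : Fin n → ℕ) (i : Fin n) : Finset (Edg n k) :=
  Finset.univ.image fun s : Fin (k i + 1) =>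
    (⟨i, ⟨2 * (s : ℕ), by have := s.isLt; omega⟩⟩ : Edg n k)

/-- `E_i`, the set of even-labelled edges `{x_{i,2}, x_{i,4}, …, x_{i,2k_i}}` of cycle `i`. -/
def Eset (n : ℕ) (k : Fin n → ℕ) (i : Fin n) : Finset (Edg n k) :=
  Finset.univ.image fun t : Fin (k i) =>
    (⟨i, ⟨2 * (t : ℕ) + 1, by have := t.isLt; omega⟩⟩ : Edg n k)

/-- The Stanley–Reisner complex `Δ_𝔤` of the initial ideal of the toric ideal:
the faces are the sets of edges whose product does not lie in `in_≺(I_𝔤)`. -/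
noncomputable def SRComplex (n : ℕ) (k : Fin n → ℕ) : Set (Finset (Edg n k)) :=
  {A | (∏ e ∈ A, (X e : MvPolynomial (Edg n k) K)) ∉ initialIdeal K n k (toricIdeal K n k)}

/-- A facet: a maximal face of a simplicial complex (given as its set of faces). -/
def IsFacet {α : Type*} (Δ : Set (Finset α)) (A : Finset α) : Prop :=
  A ∈ Δ ∧ ∀ B ∈ Δ, A ⊆ B → B = A

/-- The set `O_n ∪ E_1` of "suppressed" edges, lying in every facet of `Δ_𝔤`. -/
def suppressedSet (n : ℕ) (k : Fin n → ℕ) (hn : 0 < n) : Finset (Edg n k) :=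
  Oset n k ⟨n - 1, by omega⟩ ∪ Eset n k ⟨0, hn⟩

/-- The Stanley–Reisner complex `Δ_𝔤` written "suppressing the elements of `O_n ∪ E_1`":
the faces `A` disjoint from `O_n ∪ E_1` with `A ∪ O_n ∪ E_1 ∈ Δ_𝔤`
(i.e. the link of `O_n ∪ E_1`). -/
noncomputable def SRreduced (n : ℕ) (k : Fin n → ℕ) (hn : 0 < n) : Set (Finset (Edg n k)) :=
  {A | A ∩ suppressedSet n k hn = ∅ ∧ (A ∪ suppressedSet n k hn) ∈ SRComplex K n k}

/-- The join `Δ * X` of a simplicial complex and (the simplex on) a vertex set `X`: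
its faces are the unions of a face of `Δ` and a subset of `X`, so its facets are `F ∪ X`
for `F` a facet of `Δ`. -/
def joinSet {α : Type*} [DecidableEq α] (Δ : Set (Finset α)) (Xs : Finset α) :
    Set (Finset α) :=
  {C | ∃ A ∈ Δ, ∃ B ⊆ Xs, C = A ∪ B}

/-- Relabelling of the edges of a graph of odd cycles into a graph with (weakly) longer
cycles: `x_{i,j} ↦ x_{i,j}`. -/
def embSame (n : ℕ) (k₁ k₂ : Fin n → ℕ) (h : ∀ i, k₁ i ≤ k₂ i) : Edg n k₁ ↪ Edg n k₂ where
  toFun e := ⟨e.1, ⟨(e.2 : ℕ), by have := e.2.isLt; have := h e.1; omega⟩⟩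
  inj' := by
    rintro ⟨i, j⟩ ⟨i', j'⟩ hh
    obtain ⟨rfl, h2⟩ := Sigma.mk.inj_iff.mp hh
    simp only [heq_eq_eq, Fin.mk.injEq] at h2
    exact Sigma.ext rfl (heq_of_eq (Fin.ext h2))

/-- Relabelling of the edges of the graph `𝔤'' = 𝔤' \ C_1'` into the edges of a graph with
one more cycle: `x_{i,j} ↦ x_{i+1,j}`. -/
def embSucc (nn : ℕ) (k₁ : Fin nn → ℕ) (k₂ : Fin (nn + 1) → ℕ)
    (h : ∀ i : Fin nn, k₁ i = k₂ i.succ) : Edg nn k₁ ↪ Edg (nn + 1) k₂ where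
  toFun e := ⟨e.1.succ, ⟨(e.2 : ℕ), by have := e.2.isLt; have := h e.1; omega⟩⟩
  inj' := by
    rintro ⟨i, j⟩ ⟨i', j'⟩ hh
    obtain ⟨h1, h2⟩ := Sigma.mk.inj_iff.mp hh
    have : i = i' := Fin.succ_injective _ h1
    subst this
    simp only [heq_eq_eq, Fin.mk.injEq] at h2
    exact Sigma.ext rfl (heq_of_eq (Fin.ext h2))

end SR

end OddCycleComp


namespace OddCycleComp

section Walks

variable {n : ℕ} {k : Fin n → ℕ} (K : Type*) [Field K]

/-- Recover the label of an edge from the corresponding pair of vertices. -/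
noncomputable def labelOf (n : ℕ) (k : Fin n → ℕ) (hn : 0 < n) (hk : ∀ i, 1 ≤ k i)
    (s : Sym2 (Vtx n k)) : Edg n k :=
  letI : Nonempty (Edg n k) := ⟨⟨⟨0, hn⟩, ⟨0, by omega⟩⟩⟩
  Function.invFun (edgeSym2 (n := n) (k := k)) s

/-- The list of edge labels traversed by a walk in `𝔤`. -/
noncomputable def walkLabels (hn : 0 < n) (hk : ∀ i, 1 ≤ k i) {v : Vtx n k}
    (w : (cycGraph n k).Walk v v) : List (Edg n k) :=
  w.edges.map (labelOf n k hn hk)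

/-- `f_Γ^{(+)}`: the product of the odd-numbered (first, third, …) edges of a closed walk. -/
noncomputable def fPlus (hn : 0 < n) (hk : ∀ i, 1 ≤ k i) {v : Vtx n k}
    (w : (cycGraph n k).Walk v v) : MvPolynomial (Edg n k) K :=
  ((((walkLabels hn hk w).zipIdx.map Prod.swap).filter fun p => Even p.1).map fun p => (X p.2 :
    MvPolynomial (Edg n k) K)).prod

/-- `f_Γ^{(-)}`: the product of the even-numbered (second, fourth, …) edges of a closed walk. -/
noncomputable def fMinus (hn : 0 < n) (hk : ∀ i, 1 ≤ k i) {v : Vtx n k}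
    (w : (cycGraph n k).Walk v v) : MvPolynomial (Edg n k) K :=
  ((((walkLabels hn hk w).zipIdx.map Prod.swap).filter fun p => ¬ Even p.1).map fun p => (X p.2 :
    MvPolynomial (Edg n k) K)).prod

/-- A closed even walk `Γ` is primitive if there is no closed even walk `Γ'` with
`f_{Γ'} ≠ f_Γ`, `f_{Γ'}^{(+)} ∣ f_Γ^{(+)}` and `f_{Γ'}^{(-)} ∣ f_Γ^{(-)}`. -/
def IsPrimitiveWalk (hn : 0 < n) (hk : ∀ i, 1 ≤ k i) {v : Vtx n k}
    (w : (cycGraph n k).Walk v v) : Prop :=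
  ∀ (v' : Vtx n k) (w' : (cycGraph n k).Walk v' v'), 0 < w'.length → Even w'.length →
    fPlus K hn hk w' ∣ fPlus K hn hk w → fMinus K hn hk w' ∣ fMinus K hn hk w →
    fPlus K hn hk w' - fMinus K hn hk w' = fPlus K hn hk w - fMinus K hn hk w

/-- All the (labels of the) edges of cycle `i`. -/
def cycleEdges (n : ℕ) (k : Fin n → ℕ) (i : Fin n) : Finset (Edg n k) :=
  Finset.univ.image fun j : Fin (2 * k i + 1) => (⟨i, j⟩ : Edg n k)

end Walks

/-- The odd-cycle condition: any two vertex-disjoint odd cycles are joined by an edge. -/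
def OddCycleCondition {V : Type*} (G : SimpleGraph V) : Prop :=
  ∀ (a b : V) (A : G.Walk a a) (B : G.Walk b b), A.IsCycle → B.IsCycle →
    Odd A.length → Odd B.length → (∀ x ∈ A.support, x ∉ B.support) →
    ∃ x ∈ A.support, ∃ y ∈ B.support, G.Adj x y

end OddCycleComp


namespace OddCycleComp

variable (K : Type*) [Field K]

/-- `K[x]/I` is almost Gorenstein: via Higashitani's criterion (equivalent to the
Goto–Takahashi–Taniguchi definition for Cohen–Macaulay homogeneous domains),
`type(R) - 1 = ẽ(R)`, where `ẽ` is computed from the `h`-vector. -/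
def IsAlmostGorensteinQuot {σ : Type*} (I : Ideal (MvPolynomial σ K)) : Prop :=
  ∃ P : Polynomial ℤ, IsHPolyOf (hilbertFun K I) P ∧ (cmTypeQuot K I : ℤ) - 1 = tildeE P

/-- `K[x]/I` is Gorenstein: by Stanley's theorem, for a Cohen–Macaulay homogeneous domain
this is equivalent to the symmetry of the `h`-vector. -/
def IsGorensteinQuot {σ : Type*} (I : Ideal (MvPolynomial σ K)) : Prop :=
  ∃ P : Polynomial ℤ, IsHPolyOf (hilbertFun K I) P ∧
    ∀ i ≤ P.natDegree, P.coeff i = P.coeff (P.natDegree - i)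

end OddCycleComp


namespace OddCycleComp


section RevAux


lemma reflect_sum' {ι : Type*} (s : Finset ι) (f : ι → Polynomial ℤ) (N : ℕ) :
    Polynomial.reflect N (∑ i ∈ s, f i) = ∑ i ∈ s, Polynomial.reflect N (f i) := by
  ext j
  simp [Polynomial.coeff_reflect, Polynomial.finset_sum_coeff]

lemma geom_deg (s : ℕ) :
    (∑ i ∈ Finset.range (s + 1), (Polynomial.X : Polynomial ℤ) ^ i).natDegree ≤ s := by
  apply Polynomial.natDegree_sum_le_of_forall_le
  intro i hi
  simp only [Finset.mem_range] at hi
  exact le_trans (Polynomial.natDegree_X_pow_le i) (by omega)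

lemma geom_palin (s : ℕ) :
    Polynomial.reflect s (∑ i ∈ Finset.range (s + 1), (Polynomial.X : Polynomial ℤ) ^ i)
      = ∑ i ∈ Finset.range (s + 1), (Polynomial.X : Polynomial ℤ) ^ i := by
  rw [reflect_sum']
  conv_rhs => rw [← Finset.sum_range_reflect (fun i => (Polynomial.X : Polynomial ℤ) ^ i) (s + 1)]
  refine Finset.sum_congr rfl fun i hi => ?_
  simp only [Finset.mem_range] at hi
  rw [Polynomial.reflect_monomial, Polynomial.revAt_le (by omega)]
  rw [Nat.add_sub_cancel]

lemma reflect_pow' (p : Polynomial ℤ) (d : ℕ) (hd : p.natDegree ≤ d) (r : ℕ) :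
    Polynomial.reflect (r * d) (p ^ r) = (Polynomial.reflect d p) ^ r := by
  induction r with
  | zero => simp
  | succ r ih =>
    have hpr : (p ^ r).natDegree ≤ r * d :=
      le_trans (Polynomial.natDegree_pow_le) (Nat.mul_le_mul_left r hd)
    rw [pow_succ, pow_succ, Nat.succ_mul, Polynomial.reflect_mul _ _ hpr hd, ih]

lemma reflect_prod' {ι : Type*} (s : Finset ι) (p : ι → Polynomial ℤ) (d : ι → ℕ)
    (h : ∀ i ∈ s, (p i).natDegree ≤ d i) :
    Polynomial.reflect (∑ i ∈ s, d i) (∏ i ∈ s, p i)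
      = ∏ i ∈ s, Polynomial.reflect (d i) (p i) := by
  induction s using Finset.cons_induction with
  | empty => simp
  | cons a s ha ih =>
    rw [Finset.sum_cons, Finset.prod_cons, Finset.prod_cons,
      Polynomial.reflect_mul _ _ (h a (Finset.mem_cons_self a s))
        (le_trans (Polynomial.natDegree_prod_le s p)
          (Finset.sum_le_sum fun i hi => h i (Finset.mem_cons_of_mem hi))),
      ih fun i hi => h i (Finset.mem_cons_of_mem hi)]


end RevAux

/-- The reversal identity: for `h(t) = ∏ (1+⋯+t^j)^{r_j} - t ∏ (1+⋯+t^{j-1})^{r_j}` and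
`N = ∑ j r_j`, `n = ∑ r_j ≥ 2`, one has
`t^N h(t⁻¹) - h(t) = t (1 - t^{n-2}) ∏ (1+⋯+t^{j-1})^{r_j}`,
where `t^N h(t⁻¹)` is the reversed polynomial `∑ h_{N-i} t^i`. -/


theorem reversal_identity
    (m n : ℕ) (hm : 1 ≤ m) (r : Fin m → ℕ) (hr : ∃ j, r j ≠ 0)
    (hn : n = ∑ j, r j) (hn2 : 2 ≤ n) :
    (∑ i ∈ Finset.range ((∑ j : Fin m, ((j : ℕ) + 1) * r j) + 1),
        Polynomial.C ((hFormula m r).coeff ((∑ j : Fin m, ((j : ℕ) + 1) * r j) - i)) *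
          Polynomial.X ^ i)
      - hFormula m r
    = Polynomial.X * (1 - Polynomial.X ^ (n - 2)) *
        ∏ j : Fin m,
          (∑ i ∈ Finset.range ((j : ℕ) + 1), (Polynomial.X : Polynomial ℤ) ^ i) ^ r j := by
  classical
  set A : Polynomial ℤ :=
    ∏ j : Fin m, (∑ i ∈ Finset.range ((j : ℕ) + 2), (Polynomial.X : Polynomial ℤ) ^ i) ^ r j
    with hA
  set B : Polynomial ℤ :=
    ∏ j : Fin m, (∑ i ∈ Finset.range ((j : ℕ) + 1), (Polynomial.X : Polynomial ℤ) ^ i) ^ r j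
    with hB
  set N : ℕ := ∑ j : Fin m, ((j : ℕ) + 1) * r j with hN
  set D : ℕ := ∑ j : Fin m, (j : ℕ) * r j with hD
  have hh : hFormula m r = A - Polynomial.X * B := by
    unfold hFormula; rw [hA, hB]
  have hND : N = D + n := by
    rw [hN, hD, hn, ← Finset.sum_add_distrib]
    exact Finset.sum_congr rfl fun j _ => by ring
  have hdegB : B.natDegree ≤ D := by
    rw [hB, hD]
    refine le_trans (Polynomial.natDegree_prod_le _ _) (Finset.sum_le_sum fun j _ => ?_)
    refine le_trans Polynomial.natDegree_pow_le ?_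
    exact le_trans (Nat.mul_le_mul_left _ (geom_deg (j : ℕ))) (le_of_eq (mul_comm _ _))
  have hdegA : A.natDegree ≤ N := by
    rw [hA, hN]
    refine le_trans (Polynomial.natDegree_prod_le _ _) (Finset.sum_le_sum fun j _ => ?_)
    refine le_trans Polynomial.natDegree_pow_le ?_
    exact le_trans (Nat.mul_le_mul_left _ (geom_deg ((j : ℕ) + 1))) (le_of_eq (mul_comm _ _))
  have hreflA : Polynomial.reflect N A = A := by
    rw [hA, hN, show (∑ j : Fin m, ((j : ℕ) + 1) * r j) = ∑ j : Fin m, r j * ((j : ℕ) + 1)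
        from Finset.sum_congr rfl fun j _ => mul_comm _ _,
      reflect_prod' Finset.univ _ (fun j : Fin m => r j * ((j : ℕ) + 1)) fun j _ =>
        le_trans Polynomial.natDegree_pow_le (Nat.mul_le_mul le_rfl (geom_deg ((j : ℕ) + 1)))]
    exact Finset.prod_congr rfl fun j _ => by
      rw [reflect_pow' _ ((j : ℕ) + 1) (geom_deg ((j : ℕ) + 1)) (r j), geom_palin]
  have hreflB : Polynomial.reflect D B = B := by
    rw [hB, hD, show (∑ j : Fin m, (j : ℕ) * r j) = ∑ j : Fin m, r j * (j : ℕ)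
        from Finset.sum_congr rfl fun j _ => mul_comm _ _,
      reflect_prod' Finset.univ _ (fun j : Fin m => r j * (j : ℕ)) fun j _ =>
        le_trans Polynomial.natDegree_pow_le (Nat.mul_le_mul le_rfl (geom_deg (j : ℕ)))]
    exact Finset.prod_congr rfl fun j _ => by
      rw [reflect_pow' _ (j : ℕ) (geom_deg (j : ℕ)) (r j), geom_palin]
  have hdegh : (hFormula m r).natDegree ≤ N := by
    rw [hh]
    refine le_trans (Polynomial.natDegree_sub_le _ _) (max_le hdegA ?_)
    refine le_trans (Polynomial.natDegree_mul_le) ?_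
    have : (Polynomial.X : Polynomial ℤ).natDegree ≤ 1 := Polynomial.natDegree_X_le
    omega
  have hsum : (∑ i ∈ Finset.range (N + 1),
      Polynomial.C ((hFormula m r).coeff (N - i)) * Polynomial.X ^ i)
      = Polynomial.reflect N (hFormula m r) := by
    ext j
    rw [Polynomial.finset_sum_coeff, Polynomial.coeff_reflect]
    simp only [Polynomial.coeff_C_mul, Polynomial.coeff_X_pow, mul_ite, mul_one, mul_zero]
    rw [Finset.sum_ite_eq (Finset.range (N + 1)) j
      (fun i => (hFormula m r).coeff (N - i))]
    by_cases hj : j ≤ N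
    · rw [if_pos (Finset.mem_range.mpr (by omega)), Polynomial.revAt_le hj]
    · rw [if_neg (by simp; omega), Polynomial.revAt_eq_self_of_lt (by omega),
        Polynomial.coeff_eq_zero_of_natDegree_lt (by omega)]
  have hreflXB : Polynomial.reflect N (Polynomial.X * B) = Polynomial.X ^ (n - 1) * B := by
    have h1 : N = 1 + (D + (n - 1)) := by omega
    rw [h1, Polynomial.reflect_mul _ _ Polynomial.natDegree_X_le (by omega : B.natDegree ≤ D + (n - 1)),
      Polynomial.reflect_one_X, one_mul, show B = B * 1 from (mul_one B).symm,
      Polynomial.reflect_mul _ _ hdegB (by simp : (1 : Polynomial ℤ).natDegree ≤ n - 1),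
      hreflB, Polynomial.reflect_one, mul_one, mul_comm]
  have hreflsub : Polynomial.reflect N (A - Polynomial.X * B)
      = Polynomial.reflect N A - Polynomial.reflect N (Polynomial.X * B) := by
    ext j
    simp [Polynomial.coeff_reflect]
  rw [hsum, hh, hreflsub, hreflA, hreflXB,
    show Polynomial.X ^ (n - 1) = Polynomial.X * Polynomial.X ^ (n - 2) by
      rw [← pow_succ']; congr 1; omega]
  ring


end OddCycleComp
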